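/- Let η be a substitution and u ∈ A^ℤ a two-sided periodic point of η with growing seed s = u_{-1}|u_0 and period p. For every n ∈ ℤ \ {−1, 0}, the u-quotient q of n satisfies: if n ≥ 1 then 0 ≤ q < n, and if n ≤ −2 then n < q ≤ −1. In particular |q| < |n|. -/

import Mathlib

/-! Write `k = c + p` and `w = η^{c-1}(m_{k-1}) ⋯ η^0(m_p)`, so that the quotient is `|w|`
(minus `|η^c(u₋₁)|` when `n ≤ -2`) while the Dumont–Thomas word of `n` splits as
`η^p(w) · η^{p-1}(m_{p-1}) ⋯ η^0(m_0)`. Admissibility makes `w a_p` a prefix of `η^c(x)` for the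
seed letter `x`. As `p ∣ c`, `η^c(u₀)` begins with `u₀` and `η^c(u₋₁)` ends with `u₋₁`, and since
both seed letters grow, `η^p` strictly lengthens every nonempty word beginning with `u₀` or ending
with `u₋₁`. For `n ≥ 1` this gives `|w| < |η^p(w)| ≤ n`. For `n ≤ -2`, write
`η^c(u₋₁) = w a_p r`: the remainder `r` is nonempty, since otherwise the top `p` digits would spell
out all of `η^p(u₋₁)`, which the Dumont–Thomas normalisation excludes; so `r` ends with `u₋₁`, and
comparing lengths in `η^{c+p}(u₋₁) = η^p(w a_p r)` gives `n < q`. -/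

open Filter List

variable {A : Type*}

/-- A substitution applied to a word: concatenation of the images of its letters. -/
def substW (η : A → List A) (w : List A) : List A := (w.map η).flatten

/-- The `k`-th iterate of a substitution applied to a word. -/
def iterW (η : A → List A) (k : ℕ) (w : List A) : List A := (substW η)^[k] w

/-- `η` is a substitution: nonempty images and at least one growing letter. -/
def IsSubstitution (η : A → List A) : Prop :=
  (∀ c, η c ≠ []) ∧ ∃ a, Tendsto (fun k => (iterW η k [a]).length) atTop atTop

/-- `(m i, a i)` for `i = 0, …, len-1` is an `x`-admissible sequence:
`m (i) ++ [a i]` is a prefix of `η (a (i+1))` and `m (len-1) ++ [a (len-1)]`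
is a prefix of `η x`. -/
def AdmSeq (η : A → List A) (len : ℕ) (m : ℕ → List A) (a : ℕ → A) (x : A) : Prop :=
  (∀ i, i + 1 < len → (m i ++ [a i]) <+: η (a (i + 1))) ∧
  (1 ≤ len → (m (len - 1) ++ [a (len - 1)]) <+: η x)

/-- `Σ_{j<k} |η^j(m_j)|`. -/
def sumLen (η : A → List A) (k : ℕ) (m : ℕ → List A) : ℕ :=
  ∑ j ∈ Finset.range k, (iterW η j (m j)).length

/-- `η^{k-1}(m_{k-1}) η^{k-2}(m_{k-2}) ⋯ η^0(m_0)`. -/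
def concatDT (η : A → List A) (k : ℕ) (m : ℕ → List A) : List A :=
  ((List.range k).reverse.map (fun j => iterW η j (m j))).flatten

/-- The digit word `|m_{k-1}| ⊙ |m_{k-2}| ⊙ ⋯ ⊙ |m_0|`. -/
def dtDigits (k : ℕ) (m : ℕ → List A) : List ℕ :=
  (List.range k).reverse.map (fun j => (m j).length)

/-- Partial run of the automaton `A_{η,x}`: from state `x`, the digit `d`
moves to the `d`-th letter of `η x` when `d < |η x|`. -/
def run (η : A → List A) : List ℕ → A → Option A
  | [], x => some x
  | d :: w, x => if h : d < (η x).length then run η w ((η x)[d]) else none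

/-- `u` restricted to nonnegative positions is a periodic point of `η` of period `p`:
every `η^p`-image of a prefix of `u` is again a prefix of `u`. -/
def RightPer (η : A → List A) (p : ℕ) (u : ℤ → A) : Prop :=
  ∀ n : ℕ, ∀ j : ℕ, j < (iterW η p (List.ofFn (fun i : Fin (n+1) => u i))).length →
    (iterW η p (List.ofFn (fun i : Fin (n+1) => u i)))[j]? = some (u j)

/-- `u` restricted to negative positions is a periodic point of `η` of period `p`:
every `η^p`-image of a suffix `u_{-(n+1)} ⋯ u_{-1}` of the left part is again a
suffix of the left part of `u`. -/
def LeftPer (η : A → List A) (p : ℕ) (u : ℤ → A) : Prop :=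
  ∀ n : ℕ, ∀ j : ℕ,
    j < (iterW η p (List.ofFn (fun i : Fin (n+1) => u ((i : ℤ) - (n+1))))).length →
    (iterW η p (List.ofFn (fun i : Fin (n+1) => u ((i : ℤ) - (n+1)))))[j]? =
      some (u ((j : ℤ) -
        (iterW η p (List.ofFn (fun i : Fin (n+1) => u ((i : ℤ) - (n+1))))).length))

/-- `u : ℤ → A` is a two-sided periodic point of `η` of period `p ≥ 1` with
growing seed `u₋₁ | u₀`. -/
def TwoSidedPerPoint (η : A → List A) (p : ℕ) (u : ℤ → A) : Prop :=
  1 ≤ p ∧ RightPer η p u ∧ LeftPer η p u ∧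
  Tendsto (fun k => (iterW η k [u 0]).length) atTop atTop ∧
  Tendsto (fun k => (iterW η k [u (-1)]).length) atTop atTop

/-- The Dumont–Thomas decomposition data of a positive integer `n` with respect to
the letter `x` (Theorem of Dumont–Thomas for the right-infinite part):
`p ∣ k`, `p ≤ k`, the sequence is `x`-admissible, `m_{k-1} ⋯ m_{k-p} ≠ ε` and
`Σ_{j<k} |η^j(m_j)| = n`. -/
def PosSpec (η : A → List A) (p : ℕ) (x : A) (n : ℤ) (k : ℕ) (m : ℕ → List A)
    (a : ℕ → A) : Prop :=
  p ∣ k ∧ p ≤ k ∧ AdmSeq η k m a x ∧ (∃ i, i < p ∧ m (k - 1 - i) ≠ []) ∧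
  (sumLen η k m : ℤ) = n

/-- The Dumont–Thomas decomposition data of an integer `n ≤ -2` with respect to
the letter `b` (Theorem of Dumont–Thomas for the left-infinite part). -/
def NegSpec (η : A → List A) (p : ℕ) (b : A) (n : ℤ) (k : ℕ) (m : ℕ → List A)
    (a : ℕ → A) : Prop :=
  p ∣ k ∧ p ≤ k ∧ AdmSeq η k m a b ∧
  ((List.range p).map (fun i => iterW η (p - 1 - i) (m (k - 1 - i)))).flatten
      ++ [a (k - p)] ≠ iterW η p [b] ∧
  (sumLen η k m : ℤ) = n + (iterW η k [b]).length

/-- `w` is the Dumont–Thomas complement representation `rep_u(n)` of `n ∈ ℤ`. -/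
def RepSpec (η : A → List A) (p : ℕ) (u : ℤ → A) (n : ℤ) (w : List ℕ) : Prop :=
  (n = 0 ∧ w = [0]) ∨ (n = -1 ∧ w = [1]) ∨
  (1 ≤ n ∧ ∃ k m a, PosSpec η p (u 0) n k m a ∧ w = 0 :: dtDigits k m) ∨
  (n ≤ -2 ∧ ∃ k m a, NegSpec η p (u (-1)) n k m a ∧ w = 1 :: dtDigits k m)

/-- Run of the automaton `A_{η,s}` with initial state `start`: the first digit
`0` (resp. `1`) moves to `u 0` (resp. `u (-1)`). -/
def runSeed (η : A → List A) (u : ℤ → A) : List ℕ → Option A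
  | [] => none
  | d :: w => if d = 0 then run η w (u 0) else if d = 1 then run η w (u (-1)) else none

/-- `|η^{k-p-1}(m_{k-1}) ⋯ η^0(m_p)|`, the `u`-quotient of a positive integer. -/
def uQuotPos (η : A → List A) (p k : ℕ) (m : ℕ → List A) : ℤ :=
  ∑ j ∈ Finset.range (k - p), ((iterW η j (m (j + p))).length : ℤ)

/-- `w = tail_{η,p,x}(n)`: the digit word of the unique `x`-admissible sequence of
length `p` whose length-sum is `n`. -/
def TailSpec (η : A → List A) (p : ℕ) (x : A) (n : ℕ) (w : List ℕ) : Prop :=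
  ∃ m a, AdmSeq η p m a x ∧ sumLen η p m = n ∧ w = dtDigits p m

/-- Radix order: shorter words first, ties broken lexicographically. -/
def radLt (v w : List ℕ) : Prop :=
  v.length < w.length ∨ (v.length = w.length ∧ List.Lex (· < ·) v w)

/-- Reversed-radix order: longer words first, ties broken lexicographically. -/
def revLt (v w : List ℕ) : Prop :=
  w.length < v.length ∨ (v.length = w.length ∧ List.Lex (· < ·) v w)

/-- The total order `≺` on `{0,1}D*`. -/
def precLt (v w : List ℕ) : Prop :=
  (v.head? = some 1 ∧ w.head? = some 0) ∨
  (v.head? = some 0 ∧ w.head? = some 0 ∧ radLt v w) ∨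
  (v.head? = some 1 ∧ w.head? = some 1 ∧ revLt v w)

/-- The base-2 value `Σ_{i<k} w_i 2^i` of the word `w = w_{k-1} ⋯ w_0`. -/
def natVal2 (w : List ℕ) : ℕ := w.foldl (fun acc d => 2 * acc + d) 0

/-- The two's complement value `Σ_{i<k} w_i 2^i − w_{k-1} 2^k`. -/
def val2c (w : List ℕ) : ℤ := (natVal2 w : ℤ) - (w.headI : ℤ) * 2 ^ w.length

/-- Fibonacci numbers with `F 0 = 1`, `F 1 = 2`. -/
def fib2 : ℕ → ℕ
  | 0 => 1
  | 1 => 2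
  | n + 2 => fib2 (n + 1) + fib2 n

/-- The Fibonacci complement value `Σ_{i<k} w_i F_i − w_{k-1} F_k`
of the word `w = w_{k-1} ⋯ w_0`. -/
def valFc (w : List ℕ) : ℤ :=
  (∑ i ∈ Finset.range w.length, (w.reverse.getD i 0 : ℤ) * fib2 i) -
    (w.headI : ℤ) * fib2 w.length

section Iterate

variable {η : A → List A}

theorem substW_append (v w : List A) : substW η (v ++ w) = substW η v ++ substW η w := by
  simp [substW]

theorem iterW_zero (w : List A) : iterW η 0 w = w := rfl

theorem iterW_add (s t : ℕ) (w : List A) : iterW η (s + t) w = iterW η s (iterW η t w) :=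
  Function.iterate_add_apply ..

theorem iterW_succ (t : ℕ) (w : List A) : iterW η (t + 1) w = iterW η t (substW η w) :=
  Function.iterate_succ_apply ..

theorem iterW_succ_singleton (t : ℕ) (x : A) : iterW η (t + 1) [x] = iterW η t (η x) := by
  simp [iterW_succ, substW]

theorem iterW_nil (t : ℕ) : iterW η t ([] : List A) = [] :=
  Function.iterate_fixed (by simp [substW]) t

theorem iterW_append (t : ℕ) (v w : List A) :
    iterW η t (v ++ w) = iterW η t v ++ iterW η t w := by
  induction t generalizing v w with
  | zero => rfl
  | succ t ih => rw [iterW_succ, substW_append, ih, iterW_succ, iterW_succ]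

theorem List.IsPrefix.head?_eq {v w : List A} (h : v <+: w) (hv : v ≠ []) :
    w.head? = v.head? := by
  obtain ⟨r, rfl⟩ := h
  exact List.head?_append_of_ne_nil _ hv

theorem List.IsSuffix.getLast?_eq {v w : List A} (h : v <:+ w) (hv : v ≠ []) :
    w.getLast? = v.getLast? := by
  obtain ⟨r, rfl⟩ := h
  exact List.getLast?_append_of_ne_nil _ hv

theorem List.IsPrefix.iterW {v w : List A} (t : ℕ) (h : v <+: w) : iterW η t v <+: iterW η t w := by
  obtain ⟨r, rfl⟩ := h
  exact ⟨_, (iterW_append t v r).symm⟩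

variable (hne : ∀ x, η x ≠ [])
include hne

theorem length_le_length_substW (w : List A) : w.length ≤ (substW η w).length := by
  induction w with
  | nil => simp
  | cons x w ih =>
    have := List.length_pos_iff.mpr (hne x)
    simp only [substW, List.map_cons, List.flatten_cons, List.length_append,
      List.length_cons] at ih ⊢
    omega

theorem length_le_length_iterW (t : ℕ) (w : List A) : w.length ≤ (iterW η t w).length := by
  induction t with
  | zero => rfl
  | succ t ih =>
    rw [iterW, Function.iterate_succ_apply']
    exact ih.trans (length_le_length_substW hne _)

theorem iterW_ne_nil (t : ℕ) {w : List A} (h : w ≠ []) : iterW η t w ≠ [] :=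
  List.ne_nil_of_length_pos
    ((List.length_pos_iff.mpr h).trans_le (length_le_length_iterW hne t w))

theorem head?_iterW {w : List A} {x : A} (t : ℕ) (h : w.head? = some x) :
    (iterW η t w).head? = (iterW η t [x]).head? := by
  obtain ⟨w, rfl⟩ : ∃ w', w = x :: w' := by cases w <;> simp_all
  rw [← List.singleton_append, iterW_append,
    List.head?_append_of_ne_nil _ (iterW_ne_nil hne t (List.cons_ne_nil x []))]

theorem getLast?_iterW {w : List A} {x : A} (t : ℕ) (h : w.getLast? = some x) :
    (iterW η t w).getLast? = (iterW η t [x]).getLast? := by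
  obtain ⟨w, rfl⟩ := List.getLast?_eq_some_iff.mp h
  rw [iterW_append, List.getLast?_append_of_ne_nil _ (iterW_ne_nil hne t (List.cons_ne_nil x []))]

theorem head?_iterW_of_dvd {p c : ℕ} {x : A} (hx : (iterW η p [x]).head? = some x)
    (hdvd : p ∣ c) : (iterW η c [x]).head? = some x := by
  obtain ⟨t, rfl⟩ := hdvd
  induction t with
  | zero => rfl
  | succ t ih => rwa [Nat.mul_succ, iterW_add, head?_iterW hne _ hx]

theorem getLast?_iterW_of_dvd {p c : ℕ} {x : A} (hx : (iterW η p [x]).getLast? = some x)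
    (hdvd : p ∣ c) : (iterW η c [x]).getLast? = some x := by
  obtain ⟨t, rfl⟩ := hdvd
  induction t with
  | zero => rfl
  | succ t ih => rwa [Nat.mul_succ, iterW_add, getLast?_iterW hne _ hx]

theorem length_lt_length_iterW_of_head? {w : List A} {x : A} {t : ℕ} (h : w.head? = some x)
    (hx : 2 ≤ (iterW η t [x]).length) : w.length < (iterW η t w).length := by
  obtain ⟨w, rfl⟩ : ∃ w', w = x :: w' := by cases w <;> simp_all
  have := length_le_length_iterW hne t w
  rw [← List.singleton_append, iterW_append]
  simp only [List.length_append, List.length_singleton]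
  omega

theorem length_lt_length_iterW_of_getLast? {w : List A} {x : A} {t : ℕ}
    (h : w.getLast? = some x) (hx : 2 ≤ (iterW η t [x]).length) :
    w.length < (iterW η t w).length := by
  obtain ⟨w, rfl⟩ := List.getLast?_eq_some_iff.mp h
  have := length_le_length_iterW hne t w
  rw [iterW_append]
  simp only [List.length_append, List.length_singleton]
  omega

theorem RightPer.head?_iterW {p : ℕ} {u : ℤ → A} (hR : RightPer η p u) :
    (iterW η p [u 0]).head? = some (u 0) := by
  have hu : List.ofFn (fun i : Fin (0 + 1) => u i) = [u 0] := by simp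
  have h := hR 0 0
  rw [hu] at h
  rw [List.head?_eq_getElem?]
  exact h (List.length_pos_iff.mpr (iterW_ne_nil hne p (List.cons_ne_nil _ _)))

theorem LeftPer.getLast?_iterW {p : ℕ} {u : ℤ → A} (hL : LeftPer η p u) :
    (iterW η p [u (-1)]).getLast? = some (u (-1)) := by
  have hu : List.ofFn (fun i : Fin (0 + 1) => u ((i : ℤ) - (((0 : ℕ) : ℤ) + 1))) = [u (-1)] :=
    by simp
  have hpos := List.length_pos_iff.mpr (iterW_ne_nil hne p (List.cons_ne_nil (u (-1)) []))
  have h := hL 0 ((iterW η p [u (-1)]).length - 1)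
  rw [hu] at h
  rw [List.getLast?_eq_getElem?, h (by omega)]
  congr 2
  omega

end Iterate

theorem two_le_length_iterW_of_mem {η : A → List A} {p : ℕ} {x : A} (hp : 1 ≤ p)
    (hx : x ∈ iterW η p [x]) (hgrow : Tendsto (fun t => (iterW η t [x]).length) atTop atTop) :
    2 ≤ (iterW η p [x]).length := by
  by_contra! hlt
  obtain ⟨y, hfix⟩ : ∃ y, iterW η p [x] = [y] :=
    List.length_eq_one_iff.mp (by have := List.length_pos_of_mem hx; omega)
  obtain rfl : x = y := by rwa [hfix, List.mem_singleton] at hx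
  have hfix_pow (t : ℕ) : iterW η (p * t) [x] = [x] := by
    induction t with
    | zero => rfl
    | succ t ih => rw [Nat.mul_succ, iterW_add, hfix, ih]
  have hmul : Tendsto (fun t => p * t) atTop atTop := tendsto_id.const_mul_atTop' hp
  obtain ⟨t, ht⟩ := ((tendsto_atTop.mp (hgrow.comp hmul) 2)).exists
  simp [hfix_pow] at ht

section Admissible

variable {η : A → List A}

theorem concatDT_zero (m : ℕ → List A) : concatDT η 0 m = [] := rfl

theorem concatDT_succ (c : ℕ) (m : ℕ → List A) :
    concatDT η (c + 1) m = iterW η c (m c) ++ concatDT η c m := by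
  simp [concatDT, List.range_succ]

theorem length_concatDT (c : ℕ) (m : ℕ → List A) :
    (concatDT η c m).length = sumLen η c m := by
  induction c with
  | zero => rfl
  | succ c ih =>
    simp only [concatDT_succ, List.length_append, ih, sumLen, Finset.sum_range_succ]
    omega

theorem concatDT_add (c l : ℕ) (m : ℕ → List A) :
    concatDT η (c + l) m = iterW η l (concatDT η c fun j => m (j + l)) ++ concatDT η l m := by
  induction c with
  | zero => simp [concatDT_zero, iterW_nil]
  | succ c ih =>
    rw [Nat.add_right_comm, concatDT_succ, ih, concatDT_succ, iterW_append, ← iterW_add,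
      Nat.add_comm l c, List.append_assoc]

theorem concatDT_shift_eq_flatten_map_range (c l : ℕ) (m : ℕ → List A) :
    (concatDT η c fun j => m (j + l)) =
      ((List.range c).map fun i => iterW η (c - 1 - i) (m (l + c - 1 - i))).flatten := by
  simp only [concatDT, List.range_eq_range', List.reverse_range', List.map_map,
    Function.comp_def, Nat.zero_add]
  congr 1
  refine List.map_congr_left fun i hi => ?_
  rw [List.mem_range'_1] at hi
  rw [show c - 1 - i + l = l + c - 1 - i by omega]

theorem uQuotPos_eq_length_concatDT (p k : ℕ) (m : ℕ → List A) :
    uQuotPos η p k m = ((concatDT η (k - p) fun j => m (j + p)).length : ℤ) := by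
  rw [uQuotPos, length_concatDT, sumLen]
  push_cast
  rfl

namespace AdmSeq

variable {m : ℕ → List A} {a : ℕ → A} {x : A}

theorem shift {c l : ℕ} (h : AdmSeq η (c + l) m a x) :
    AdmSeq η c (fun j => m (j + l)) (fun j => a (j + l)) x := by
  refine ⟨fun i hi => ?_, fun hc => ?_⟩
  · simpa only [Nat.add_right_comm i 1 l] using h.1 (i + l) (by omega)
  · simpa only [Nat.sub_add_comm hc] using h.2 (by omega)

theorem restrict {k l : ℕ} (h : AdmSeq η k m a x) (hl : l < k) : AdmSeq η l m a (a l) :=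
  ⟨fun i hi => h.1 i (by omega),
    fun hl' => by simpa [Nat.sub_add_cancel hl'] using h.1 (l - 1) (by omega)⟩

theorem concatDT_append_prefix {c : ℕ} (h : AdmSeq η c m a x) (hc : 0 < c) :
    concatDT η c m ++ [a 0] <+: iterW η c [x] := by
  induction c generalizing x with
  | zero => omega
  | succ c ih =>
    have htop : m c ++ [a c] <+: η x := h.2 le_add_self
    rw [concatDT_succ, iterW_succ_singleton, List.append_assoc]
    rcases Nat.eq_zero_or_pos c with rfl | hc
    · simpa [concatDT_zero, iterW_zero] using htop
    · calc iterW η c (m c) ++ (concatDT η c m ++ [a 0])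
          <+: iterW η c (m c) ++ iterW η c [a c] :=
            (List.prefix_append_right_inj _).mpr (ih (h.restrict (Nat.lt_succ_self c)) hc)
        _ <+: iterW η c (η x) := by rw [← iterW_append]; exact htop.iterW c

theorem length_concatDT_lt {c : ℕ} (h : AdmSeq η c m a x) :
    (concatDT η c m).length < (iterW η c [x]).length := by
  rcases Nat.eq_zero_or_pos c with rfl | hc
  · simp [concatDT_zero, iterW_zero]
  · simpa using (h.concatDT_append_prefix hc).length_le

variable (hne : ∀ x, η x ≠ [])
include hne

theorem length_concatDT_shift_lt_sumLen {p c : ℕ} (hx : (iterW η p [x]).head? = some x)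
    (hx2 : 2 ≤ (iterW η p [x]).length) (hdvd : p ∣ c) (h : AdmSeq η (c + p) m a x)
    (hpos : 0 < sumLen η (c + p) m) :
    (concatDT η c fun j => m (j + p)).length < sumLen η (c + p) m := by
  set w := concatDT η c fun j => m (j + p)
  have hsplit : sumLen η (c + p) m = (iterW η p w).length + (concatDT η p m).length := by
    rw [← length_concatDT, concatDT_add, List.length_append]
  rcases eq_or_ne w [] with hw | hw
  · rwa [hw, List.length_nil]
  have hc : 0 < c := Nat.pos_of_ne_zero fun hc => hw (by simp [w, hc, concatDT_zero])
  have hhead : w.head? = some x := by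
    rw [← head?_iterW_of_dvd hne hx hdvd,
      ((List.prefix_append _ _).trans (h.shift.concatDT_append_prefix hc)).head?_eq hw]
  have := length_lt_length_iterW_of_head? hne hhead hx2
  omega

theorem length_concatDT_shift_add_one_lt {p c : ℕ} (hp : 0 < p) (hpc : p ≤ c)
    (h : AdmSeq η (c + p) m a x)
    (hproper : concatDT η p (fun j => m (j + c)) ++ [a c] ≠ iterW η p [x]) :
    (concatDT η c fun j => m (j + p)).length + 1 < (iterW η c [x]).length := by
  obtain ⟨d, rfl⟩ := Nat.exists_eq_add_of_le' hpc
  have h' : AdmSeq η (p + (d + p)) m a x := by rwa [Nat.add_comm] at h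
  obtain ⟨r, hr⟩ := h'.shift.concatDT_append_prefix hp
  have hr_ne : r ≠ [] := by rintro rfl; exact hproper (by simpa using hr)
  have hlow : (concatDT η d fun j => m (j + p)).length < (iterW η d [a (d + p)]).length :=
    (h.shift.restrict (Nat.lt_add_of_pos_right hp)).length_concatDT_lt
  have htop := congrArg (fun w => (iterW η d w).length) hr
  have hr_len := List.length_pos_iff.mpr (iterW_ne_nil hne d hr_ne)
  rw [iterW_add, Nat.add_comm d p, concatDT_add]
  simp only [Nat.zero_add, Nat.add_assoc, iterW_append, List.length_append] at htop ⊢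
  omega

theorem sumLen_add_length_iterW_lt {p c : ℕ} (hx : (iterW η p [x]).getLast? = some x)
    (hx2 : 2 ≤ (iterW η p [x]).length) (hdvd : p ∣ c) (hc : 0 < c)
    (h : AdmSeq η (c + p) m a x)
    (hproper : concatDT η p (fun j => m (j + c)) ++ [a c] ≠ iterW η p [x]) :
    sumLen η (c + p) m + (iterW η c [x]).length <
      (concatDT η c fun j => m (j + p)).length + (iterW η (c + p) [x]).length := by
  have hp : 0 < p := Nat.pos_of_ne_zero fun hp => by simp [hp, iterW_zero] at hx2
  obtain ⟨r, hr⟩ := h.shift.concatDT_append_prefix hc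
  rw [Nat.zero_add] at hr
  have hr_ne : r ≠ [] := by
    rintro rfl
    have := length_concatDT_shift_add_one_lt hne hp (Nat.le_of_dvd hc hdvd) h hproper
    simp [← hr] at this
  have hr_last : r.getLast? = some x := by
    rw [← getLast?_iterW_of_dvd hne hx hdvd, ← hr, (List.suffix_append _ r).getLast?_eq hr_ne]
  have hr_lt := length_lt_length_iterW_of_getLast? hne hr_last hx2
  have hlow := (h.restrict (Nat.lt_add_of_pos_left hc)).length_concatDT_lt
  have hsplit : sumLen η (c + p) m =
      (iterW η p (concatDT η c fun j => m (j + p))).length + (concatDT η p m).length := by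
    rw [← length_concatDT, concatDT_add, List.length_append]
  have hlen := congrArg List.length hr
  have hlen' := congrArg (fun v => (iterW η p v).length) hr
  rw [← iterW_add, Nat.add_comm p c] at hlen'
  simp only [iterW_append, List.length_append, List.length_singleton] at hlen hlen'
  omega

end AdmSeq

end Admissible

theorem quotient_bounds_general (η : A → List A) (hη : IsSubstitution η)
    (p : ℕ) (u : ℤ → A) (hu : TwoSidedPerPoint η p u) (n : ℤ) :
    (∀ (k : ℕ) (m : ℕ → List A) (a : ℕ → A), 1 ≤ n →
      PosSpec η p (u 0) n k m a →
      0 ≤ uQuotPos η p k m ∧ uQuotPos η p k m < n ∧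
        (uQuotPos η p k m).natAbs < n.natAbs) ∧
    (∀ (k : ℕ) (m : ℕ → List A) (a : ℕ → A), n ≤ -2 →
      NegSpec η p (u (-1)) n k m a →
      n < uQuotPos η p k m - (iterW η (k - p) [u (-1)]).length ∧
      uQuotPos η p k m - (iterW η (k - p) [u (-1)]).length ≤ -1 ∧
      (uQuotPos η p k m - (iterW η (k - p) [u (-1)]).length).natAbs < n.natAbs) := by
  obtain ⟨hne, -⟩ := hη
  obtain ⟨hp, hR, hL, hgrow₀, hgrow₁⟩ := hu
  have hhead := hR.head?_iterW hne
  have hlast := hL.getLast?_iterW hne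
  have hlen₀ := two_le_length_iterW_of_mem hp (List.mem_of_mem_head? hhead) hgrow₀
  have hlen₁ := two_le_length_iterW_of_mem hp (List.mem_of_getLast? hlast) hgrow₁
  refine ⟨fun k m a hn ⟨hdvd, hpk, hadm, _, hsum⟩ => ?_,
    fun k m a hn ⟨hdvd, hpk, hadm, hproper, hsum⟩ => ?_⟩
  all_goals
    obtain ⟨c, rfl⟩ := Nat.exists_eq_add_of_le' hpk
    replace hdvd : p ∣ c := (Nat.dvd_add_left (dvd_refl p)).mp hdvd
    rw [uQuotPos_eq_length_concatDT, Nat.add_sub_cancel]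
  · have := hadm.length_concatDT_shift_lt_sumLen hne hhead hlen₀ hdvd (by omega)
    omega
  · have := hadm.shift.length_concatDT_lt
    rcases Nat.eq_zero_or_pos c with rfl | hc
    · simp only [concatDT_zero, iterW_zero, List.length_nil, List.length_singleton]
      omega
    · have := hadm.sumLen_add_length_iterW_lt hne hlast hlen₁ hdvd hc (by
        simpa only [concatDT_shift_eq_flatten_map_range, Nat.add_sub_cancel] using hproper)
      omega

/-- The `u`-quotient `q` of `n ∈ ℤ \ {-1,0}` satisfies
`0 ≤ q < n` when `n ≥ 1` and `n < q ≤ -1` when `n ≤ -2`; in particular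
`|q| < |n|`. -/
theorem quotient_bounds [Finite A] (η : A → List A) (hη : IsSubstitution η)
    (p : ℕ) (u : ℤ → A) (hu : TwoSidedPerPoint η p u) (n : ℤ) :
    (∀ (k : ℕ) (m : ℕ → List A) (a : ℕ → A), 1 ≤ n →
      PosSpec η p (u 0) n k m a →
      0 ≤ uQuotPos η p k m ∧ uQuotPos η p k m < n ∧
        (uQuotPos η p k m).natAbs < n.natAbs) ∧
    (∀ (k : ℕ) (m : ℕ → List A) (a : ℕ → A), n ≤ -2 →
      NegSpec η p (u (-1)) n k m a →
      n < uQuotPos η p k m - (iterW η (k - p) [u (-1)]).length ∧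
      uQuotPos η p k m - (iterW η (k - p) [u (-1)]).length ≤ -1 ∧
      (uQuotPos η p k m - (iterW η (k - p) [u (-1)]).length).natAbs < n.natAbs) :=
  quotient_bounds_general η hη p u hu n
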